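/- Let u and v be two words such that there is no word w with both u ∈ w^* and v ∈ w^* (i.e., u and v are not powers of the same word). Then for any L, M ≥ 2, the word α = u^L · v^M is primitive. -/

import Mathlib

/-!
The theorem is the Lyndon–Schützenberger theorem applied to `w ^ k = u ^ L ++ v ^ M`: if
`x ^ K = y ^ L ++ z ^ M` with `K, L, M ≥ 2`, then `y` and `z` are powers of a common word. We
prove it by strong induction on `|x ^ K|`. Passing to primitive roots and, if necessary, reversing
all words, we may assume `x`, `y`, `z` primitive and `|z ^ M| ≤ |y ^ L|`. A primitive word occurs
in its own powers only at multiples of its length, so if `|y ^ L| ≥ |x| + |y|` (or symmetrically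
`|z ^ M| ≥ |x| + |z|`), then `y` (resp. `z`) is a power of `x`, and so is the other one.
Otherwise `K ≤ 3`. For `K = 2`, writing `y ^ L = x s` and `y = s t`, conjugation by `s` gives the
shorter equation `(t s) ^ L = z ^ M s ^ 2`; by induction `z` and `s` are powers of a common word,
so `x = s z ^ M` is not primitive. For `K = 3` one finds `L = 2` and, solving a conjugacy
equation, `y = (A B) ^ (q + 1) A` and `z ^ M = B A (A B) ^ (q + 2) A A B`, which is incompatible
with primitivity of `y` and `z`.
-/

/-- `wpow w n` is the `n`-fold concatenation (iteration) of the word `w`. -/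
def wpow {A : Type*} (w : List A) : ℕ → List A
  | 0 => []
  | n + 1 => w ++ wpow w n

/-- A word is primitive if it cannot be written as `v ^ k` for any `k ≥ 2`. -/
def Primitive {A : Type*} (w : List A) : Prop :=
  ∀ (v : List A) (k : ℕ), 2 ≤ k → w ≠ wpow v k

section

variable {α : Type*}

@[simp] theorem wpow_zero (w : List α) : wpow w 0 = [] := rfl

theorem wpow_succ' (w : List α) (n : ℕ) : wpow w (n + 1) = w ++ wpow w n := rfl

@[simp] theorem wpow_one (w : List α) : wpow w 1 = w := List.append_nil w

theorem wpow_add (w : List α) (m n : ℕ) : wpow w (m + n) = wpow w m ++ wpow w n := by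
  induction m with
  | zero => simp
  | succ m ih => rw [Nat.succ_add, wpow_succ', wpow_succ', ih, List.append_assoc]

theorem wpow_succ (w : List α) (n : ℕ) : wpow w (n + 1) = wpow w n ++ w := by
  rw [wpow_add, wpow_one]

theorem wpow_two (w : List α) : wpow w 2 = w ++ w := by
  simp [wpow_succ']

theorem wpow_mul (w : List α) (m n : ℕ) : wpow w (m * n) = wpow (wpow w m) n := by
  induction n with
  | zero => rfl
  | succ n ih => rw [Nat.mul_succ, wpow_add, ih, wpow_succ]

@[simp] theorem length_wpow (w : List α) (n : ℕ) : (wpow w n).length = n * w.length := by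
  induction n with
  | zero => simp
  | succ n ih => rw [wpow_succ', List.length_append, ih, Nat.succ_mul, Nat.add_comm]

@[simp] theorem nil_wpow (n : ℕ) : wpow ([] : List α) n = [] := by
  induction n with
  | zero => rfl
  | succ n ih => rw [wpow_succ', ih, List.append_nil]

@[simp] theorem wpow_eq_nil_iff {w : List α} {n : ℕ} : wpow w n = [] ↔ n = 0 ∨ w = [] := by
  rw [← List.length_eq_zero_iff, length_wpow, Nat.mul_eq_zero, List.length_eq_zero_iff]

@[simp] theorem reverse_wpow (w : List α) (n : ℕ) : (wpow w n).reverse = wpow w.reverse n := by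
  induction n with
  | zero => rfl
  | succ n ih => rw [wpow_succ', List.reverse_append, ih, wpow_succ]

theorem wpow_append_append (a b : List α) (n : ℕ) :
    wpow (a ++ b) n ++ a = a ++ wpow (b ++ a) n := by
  induction n with
  | zero => simp
  | succ n ih => simp [wpow_succ', ih]

theorem List.exists_append_of_append_eq_append {P Q R S : List α} (h : P ++ Q = R ++ S)
    (hR : R.length ≤ P.length) : ∃ T, P = R ++ T ∧ S = T ++ Q := by
  rcases List.append_eq_append_iff.1 h with ⟨T, rfl, rfl⟩ | ⟨T, hP, hS⟩
  · obtain rfl : T = [] := by simpa using hR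
    exact ⟨[], by simp, by simp⟩
  · exact ⟨T, hP, hS⟩

def CommonRoot (u v : List α) : Prop :=
  ∃ (w : List α) (i j : ℕ), u = wpow w i ∧ v = wpow w j

namespace CommonRoot

theorem nil_left (v : List α) : CommonRoot [] v := ⟨v, 0, 1, rfl, (wpow_one v).symm⟩

theorem nil_right (u : List α) : CommonRoot u [] := ⟨u, 1, 0, (wpow_one u).symm, rfl⟩

theorem symm {u v : List α} : CommonRoot u v → CommonRoot v u
  | ⟨w, i, j, hu, hv⟩ => ⟨w, j, i, hv, hu⟩

theorem wpow {u v : List α} (h : CommonRoot u v) (m n : ℕ) :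
    CommonRoot (_root_.wpow u m) (_root_.wpow v n) := by
  obtain ⟨w, i, j, rfl, rfl⟩ := h
  exact ⟨w, i * m, j * n, (wpow_mul w i m).symm, (wpow_mul w j n).symm⟩

theorem reverse {u v : List α} (h : CommonRoot u v) : CommonRoot u.reverse v.reverse := by
  obtain ⟨w, i, j, rfl, rfl⟩ := h
  exact ⟨w.reverse, i, j, reverse_wpow w i, reverse_wpow w j⟩

end CommonRoot

theorem commonRoot_of_append_comm {s t : List α} (h : s ++ t = t ++ s) : CommonRoot s t := by
  induction hn : s.length + t.length using Nat.strong_induction_on generalizing s t with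
  | _ n ih =>
  wlog hst : s.length ≤ t.length generalizing s t
  · exact (this h.symm (by omega) (by omega)).symm
  rcases eq_or_ne s [] with rfl | hs
  · exact .nil_left t
  obtain ⟨T, ht, ht'⟩ := List.exists_append_of_append_eq_append h.symm hst
  have hlt : s.length + T.length < n := by
    have := List.length_pos_iff.2 hs
    rw [← hn, ht, List.length_append]
    omega
  obtain ⟨ρ, i, j, rfl, rfl⟩ := ih _ hlt (ht.symm.trans ht') rfl
  exact ⟨ρ, i, i + j, rfl, by rw [ht, wpow_add]⟩

theorem exists_conj_factorization {a b X : List α} (hb : b ≠ []) (h : b ++ X = X ++ a) :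
    ∃ u v k, b = u ++ v ∧ a = v ++ u ∧ X = wpow (u ++ v) k ++ u := by
  induction hn : X.length using Nat.strong_induction_on generalizing X with
  | _ n ih =>
  rcases le_or_gt X.length b.length with hle | hlt
  · obtain ⟨v, hb, ha⟩ := List.exists_append_of_append_eq_append h hle
    exact ⟨X, v, 0, hb, ha, rfl⟩
  obtain ⟨T, hX, hX'⟩ := List.exists_append_of_append_eq_append h.symm hlt.le
  have hT : T.length < n := by
    have := List.length_pos_iff.2 hb
    rw [← hn, hX, List.length_append]
    omega
  obtain ⟨u, v, k, rfl, rfl, rfl⟩ := ih _ hT (hX.symm.trans hX') rfl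
  exact ⟨u, v, k + 1, rfl, rfl, by rw [hX, wpow_succ']; simp⟩

theorem exists_append_swap_eq_wpow {u v ρ : List α} {k : ℕ} (h : v ++ u = wpow ρ k) :
    ∃ ρ₁ ρ₂, ρ = ρ₁ ++ ρ₂ ∧ u ++ v = wpow (ρ₂ ++ ρ₁) k := by
  induction hn : v.length using Nat.strong_induction_on generalizing u v with
  | _ n ih =>
  cases k with
  | zero =>
    obtain ⟨rfl, rfl⟩ := List.append_eq_nil_iff.1 h
    exact ⟨ρ, [], by simp, rfl⟩
  | succ k =>
    rcases eq_or_ne ρ [] with rfl | hρ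
    · obtain ⟨rfl, rfl⟩ := List.append_eq_nil_iff.1 (h.trans (nil_wpow _))
      exact ⟨[], [], rfl, by simp⟩
    rw [wpow_succ'] at h
    rcases le_or_gt v.length ρ.length with hle | hlt
    · obtain ⟨p, rfl, rfl⟩ := List.exists_append_of_append_eq_append h.symm hle
      refine ⟨v, p, rfl, ?_⟩
      rw [← wpow_append_append, wpow_succ, List.append_assoc]
    obtain ⟨v', rfl, hv'⟩ := List.exists_append_of_append_eq_append h hlt.le
    have hlt' : v'.length < n := by
      have := List.length_pos_iff.2 hρ
      rw [← hn, List.length_append]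
      omega
    obtain ⟨ρ₁, ρ₂, hρ, hrot⟩ :=
      ih _ hlt' (u := u ++ ρ) (by rw [← List.append_assoc, ← hv', wpow_succ]) rfl
    exact ⟨ρ₁, ρ₂, hρ, by rw [← hrot, List.append_assoc]⟩

namespace Primitive

theorem ne_nil {w : List α} (hw : Primitive w) : w ≠ [] := by
  rintro rfl
  exact hw [] 2 le_rfl (nil_wpow 2).symm

theorem eq_one_of_eq_wpow {w ρ : List α} {n : ℕ} (hw : Primitive w) (h : w = wpow ρ n) :
    n = 1 := by
  rcases Nat.lt_or_ge n 2 with hn | hn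
  · have : n ≠ 0 := by
      rintro rfl
      exact hw.ne_nil h
    omega
  · exact absurd h (hw ρ n hn)

theorem reverse {w : List α} (hw : Primitive w) : Primitive w.reverse := by
  intro v k hk h
  exact hw v.reverse k hk (by rw [← reverse_wpow, ← h, List.reverse_reverse])

theorem append_swap {u v : List α} (h : Primitive (u ++ v)) : Primitive (v ++ u) := by
  intro ρ k hk hvu
  obtain ⟨ρ₁, ρ₂, -, huv⟩ := exists_append_swap_eq_wpow hvu
  exact h _ k hk huv

end Primitive

theorem exists_primitive_root {w : List α} (hw : w ≠ []) :
    ∃ ρ e, 0 < e ∧ Primitive ρ ∧ w = wpow ρ e := by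
  induction hn : w.length using Nat.strong_induction_on generalizing w with
  | _ n ih =>
  by_cases hp : Primitive w
  · exact ⟨w, 1, one_pos, hp, (wpow_one w).symm⟩
  simp only [Primitive, not_forall, not_not] at hp
  obtain ⟨v, k, hk, rfl⟩ := hp
  have hv : v ≠ [] := by
    rintro rfl
    simp at hw
  have hlt : v.length < n := by
    have := List.length_pos_iff.2 hv
    rw [← hn, length_wpow]
    nlinarith
  obtain ⟨ρ, e, he, hρ, rfl⟩ := ih _ hlt hv rfl
  exact ⟨ρ, e * k, Nat.mul_pos he (by omega), hρ, (wpow_mul ρ e k).symm⟩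

theorem Primitive.eq_nil_or_eq_nil_of_append_eq {x P S : List α} (hx : Primitive x)
    (h : x ++ x = P ++ x ++ S) : P = [] ∨ S = [] := by
  have hP : P.length ≤ x.length := by
    have := congrArg List.length h
    simp only [List.length_append] at this
    omega
  obtain ⟨U, rfl, hU⟩ :=
    List.exists_append_of_append_eq_append (h.trans (List.append_assoc _ _ _)) hP
  obtain ⟨hcomm, rfl⟩ := List.append_inj (s₁ := U ++ P) (s₂ := P ++ U) (by simpa using hU.symm)
    (by simp [Nat.add_comm])
  obtain ⟨ρ, i, j, rfl, rfl⟩ := commonRoot_of_append_comm hcomm.symm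
  have := hx.eq_one_of_eq_wpow (wpow_add ρ i j).symm
  rcases (by omega : i = 0 ∨ j = 0) with rfl | rfl <;> simp

theorem Primitive.length_dvd_of_wpow_eq {x P S : List α} {K : ℕ} (hx : Primitive x)
    (h : wpow x K = P ++ x ++ S) : x.length ∣ P.length := by
  induction K generalizing P with
  | zero => simp [hx.ne_nil] at h
  | succ K ih =>
    rw [wpow_succ'] at h
    rcases le_or_gt x.length P.length with hle | hlt
    · obtain ⟨P', rfl, hP'⟩ := List.exists_append_of_append_eq_append
        (by simpa using h.symm : P ++ (x ++ S) = x ++ wpow x K) hle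
      rw [List.length_append]
      exact Nat.dvd_add (dvd_refl _) (ih (by simpa using hP'))
    cases K with
    | zero =>
      have := congrArg List.length h
      simp only [wpow_zero, List.append_nil, List.length_append] at this
      simp [show P.length = 0 by omega]
    | succ K =>
      rw [wpow_succ'] at h
      obtain ⟨T, hT, -⟩ := List.exists_append_of_append_eq_append (P := x ++ x) (R := P ++ x)
        (by simpa using h) (by simp only [List.length_append]; omega)
      rcases hx.eq_nil_or_eq_nil_of_append_eq hT with rfl | rfl
      · simp
      · have := congrArg List.length hT
        simp only [List.length_append, List.length_nil] at this
        omega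

theorem eq_wpow_of_wpow_eq_append {x W R : List α} {K a : ℕ} (h : wpow x K = W ++ R)
    (hW : W.length = a * x.length) (ha : a ≤ K) : W = wpow x a := by
  obtain ⟨b, rfl⟩ := Nat.exists_eq_add_of_le ha
  rw [wpow_add] at h
  exact (List.append_inj h.symm (by simp [hW])).1

theorem Primitive.exists_eq_wpow_of_wpow_eq_wpow_append {x y R : List α} {K L : ℕ}
    (hx : Primitive x) (h : wpow x K = wpow y L ++ R)
    (hlong : x.length + y.length ≤ L * y.length) : ∃ a, y = wpow x a := by
  rcases eq_or_ne y [] with rfl | hy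
  · exact ⟨0, rfl⟩
  have hx0 := List.length_pos_iff.2 hx.ne_nil
  obtain ⟨L, rfl⟩ := Nat.exists_eq_add_one_of_ne_zero (n := L) (by rintro rfl; simp [hy] at hlong)
  obtain ⟨K, rfl⟩ := Nat.exists_eq_add_one_of_ne_zero (n := K) (by rintro rfl; simp [hy] at h)
  rw [Nat.succ_mul] at hlong
  obtain ⟨T, hT, -⟩ := List.exists_append_of_append_eq_append (P := wpow y L) (Q := y ++ R)
    (R := x) (S := wpow x K) (by rw [← List.append_assoc, ← wpow_succ, ← h, wpow_succ'])
    (by simp only [length_wpow]; omega)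
  have hocc : wpow x (K + 1) = y ++ x ++ (T ++ R) := by
    rw [h, wpow_succ', hT]
    simp
  obtain ⟨a, ha⟩ := hx.length_dvd_of_wpow_eq hocc
  refine ⟨a, eq_wpow_of_wpow_eq_append (R := wpow y L ++ R)
    (by rw [h, wpow_succ', List.append_assoc]) (by rw [ha, Nat.mul_comm]) ?_⟩
  have hlen := congrArg List.length h
  simp only [length_wpow, List.length_append] at hlen
  exact Nat.le_of_mul_le_mul_right (by nlinarith) hx0

theorem Primitive.eq_of_wpow_eq_wpow {s t : List α} {P Q : ℕ} (hs : Primitive s)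
    (ht : Primitive t) (hP : P ≠ 0) (h : wpow s P = wpow t Q) : s = t := by
  wlog hst : s.length ≤ t.length generalizing s t P Q
  · have hQ : Q ≠ 0 := by
      rintro rfl
      simp [hP, hs.ne_nil] at h
    exact (this ht hs hQ h.symm (by omega)).symm
  obtain ⟨a, rfl⟩ : ∃ a, t = wpow s a := by
    rcases Nat.lt_or_ge Q 2 with hQ | hQ
    · obtain rfl : Q = 1 := by
        rcases Q with _ | _ | _
        · simp [hP, hs.ne_nil] at h
        · rfl
        · omega
      exact ⟨P, by simpa using h.symm⟩
    · exact hs.exists_eq_wpow_of_wpow_eq_wpow_append (R := []) (by simpa using h) (by nlinarith)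
  rw [ht.eq_one_of_eq_wpow rfl, wpow_one]

theorem commonRoot_of_length_add_le {x y z : List α} {K L M : ℕ} (hx : Primitive x)
    (hz : Primitive z) (hM : M ≠ 0) (h : wpow x K = wpow y L ++ wpow z M)
    (hlong : x.length + y.length ≤ L * y.length) : CommonRoot y z := by
  obtain ⟨a, rfl⟩ := hx.exists_eq_wpow_of_wpow_eq_wpow_append h hlong
  rw [← wpow_mul] at h
  have haL : a * L ≤ K := by
    have hlen := congrArg List.length h
    simp only [length_wpow, List.length_append] at hlen
    exact Nat.le_of_mul_le_mul_right (by omega) (List.length_pos_iff.2 hx.ne_nil)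
  obtain ⟨n, rfl⟩ := Nat.exists_eq_add_of_le haL
  rw [wpow_add] at h
  have hzx : z = x := hz.eq_of_wpow_eq_wpow hx hM (List.append_cancel_left h).symm
  exact ⟨x, a, 1, rfl, by rw [hzx, wpow_one]⟩

theorem exists_shorter_of_wpow_two {x y z : List α} {L M : ℕ} (hx : Primitive x) (hz : z ≠ [])
    (hL : 2 ≤ L) (hM : 2 ≤ M) (h : wpow x 2 = wpow y L ++ wpow z M)
    (hside : M * z.length ≤ L * y.length) (hshort : L * y.length < x.length + y.length) :
    ∃ s t, (wpow (t ++ s) L).length < (wpow x 2).length ∧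
      wpow (t ++ s) L = wpow z M ++ wpow s 2 ∧ ¬ CommonRoot z s := by
  have hlen : 2 * x.length = L * y.length + M * z.length := by
    simpa using congrArg List.length h
  obtain ⟨s, hys, hxs⟩ := List.exists_append_of_append_eq_append (P := wpow y L) (R := x)
    (h.symm.trans (wpow_two x)) (by simp only [length_wpow]; omega)
  have hs : s ≠ [] := by
    rintro rfl
    exact hx y L hL (by simpa using hys.symm)
  obtain ⟨L, rfl⟩ : ∃ L', L = L' + 1 := ⟨L - 1, by omega⟩
  have hslen : s.length + x.length = (L + 1) * y.length := by
    simpa [Nat.add_comm] using (congrArg List.length hys).symm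
  obtain ⟨t, rfl, -⟩ := List.exists_append_of_append_eq_append (P := y) (Q := wpow y L) (R := s)
    (S := wpow z M ++ s) (by rw [← wpow_succ', hys, hxs, List.append_assoc]) (by nlinarith)
  refine ⟨s, t, ?_, List.append_cancel_left (as := s) ?_, ?_⟩
  · simp only [length_wpow, List.length_append] at hshort ⊢
    nlinarith
  · rw [← wpow_append_append, hys, hxs, wpow_two]
    simp
  · rintro ⟨ρ, i, j, rfl, rfl⟩
    have hx1 := hx.eq_one_of_eq_wpow (n := j + i * M)
      (hxs.trans (by rw [← wpow_mul, ← wpow_add]))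
    rcases Nat.eq_zero_or_pos i with rfl | hi
    · exact hz rfl
    · nlinarith

theorem exists_factorization_of_wpow_three {x y w : List α} (h : wpow x 3 = wpow y 2 ++ w)
    (hyx : y.length < x.length) (hxy : x.length ≤ 2 * y.length) :
    ∃ A B q, y = wpow (A ++ B) (q + 1) ++ A ∧ x = y ++ (A ++ B) ∧
      w = B ++ A ++ wpow (A ++ B) (q + 2) ++ (A ++ (A ++ B)) := by
  -- Overlapping `y y` with `x x x` gives `x = s t r`, `y = s t = r s` and `w = t r s t r`.
  obtain ⟨s, hyy, hxx⟩ := List.exists_append_of_append_eq_append (P := y ++ y) (Q := w)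
    (R := x) (S := x ++ x) (by simpa [wpow_succ'] using h.symm)
    (by simp only [List.length_append]; omega)
  have hslen := congrArg List.length hyy
  simp only [List.length_append] at hslen
  obtain ⟨r, rfl, hyr⟩ := List.exists_append_of_append_eq_append hyy.symm hyx.le
  obtain ⟨g, hg, rfl⟩ := List.exists_append_of_append_eq_append hxx
    (by simp only [List.length_append] at hslen ⊢; omega)
  obtain ⟨t, hyt, rfl⟩ := List.exists_append_of_append_eq_append hg (by omega)
  have hr : r ≠ [] := by
    rintro rfl
    simp at hyx
  obtain ⟨A, B, q, rfl, rfl, rfl⟩ := exists_conj_factorization hr (hyr.symm.trans hyt)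
  subst hyt
  refine ⟨A, B, q, by rw [wpow_succ]; simp, rfl, ?_⟩
  rw [show q + 2 = q + 1 + 1 from rfl, wpow_succ', wpow_succ]
  simp

theorem not_primitive_of_append_self_eq {A B z : List α}
    (h : z ++ z = B ++ A ++ wpow (A ++ B) 4 ++ (A ++ (A ++ B))) :
    ¬ Primitive (wpow (A ++ B) 3 ++ A) := by
  intro hy
  -- With `A = A₁ A₂` halved, the two halves of `z z` give `B A₁ = A₂ B` and `A₂ A₁ = A₁ A₂`,
  -- so `A₁ = A₂` commutes with `B`.
  have hlen := congrArg List.length h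
  simp only [List.length_append, length_wpow] at hlen
  obtain ⟨A₁, A₂, rfl, h₁, h₂⟩ : ∃ A₁ A₂, A = A₁ ++ A₂ ∧
      A₁.length = z.length - 3 * (A.length + B.length) ∧
      A₂.length = z.length - 3 * (A.length + B.length) :=
    ⟨_, _, (List.take_append_drop (z.length - 3 * (A.length + B.length)) A).symm,
      by simp; omega, by simp; omega⟩
  simp only [List.length_append] at hlen h₁ h₂
  have hsplit : z ++ z = (B ++ A₁ ++ A₂ ++ A₁ ++ A₂ ++ B ++ A₁ ++ A₂ ++ B ++ A₁) ++
      (A₂ ++ B ++ A₁ ++ A₂ ++ B ++ A₁ ++ A₂ ++ A₁ ++ A₂ ++ B) := by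
    rw [h]
    simp [wpow_succ']
  obtain ⟨hz₁, hz₂⟩ := List.append_inj hsplit (by simp only [List.length_append]; omega)
  obtain ⟨hBA, hrest⟩ := List.append_inj (s₁ := B ++ A₁) (s₂ := A₂ ++ B)
    (by simpa using hz₁.symm.trans hz₂) (by simp only [List.length_append]; omega)
  obtain ⟨hA, -⟩ := List.append_inj (s₁ := A₂ ++ A₁) (s₂ := A₁ ++ A₂) (by simpa using hrest)
    (by simp [Nat.add_comm])
  obtain rfl : A₁ = A₂ := (List.append_inj hA (by omega)).1.symm
  obtain ⟨τ, i, j, rfl, rfl⟩ := commonRoot_of_append_comm hBA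
  have := hy.eq_one_of_eq_wpow (ρ := τ) (n := (j + j + i) * 3 + (j + j)) (by
    rw [wpow_add τ _ (j + j), wpow_mul, wpow_add, wpow_add])
  omega

theorem false_of_wpow_eq_append_wpow {A B z : List α} {q M : ℕ}
    (hy : Primitive (wpow (A ++ B) (q + 1) ++ A)) (hz : Primitive z) (hB : B ≠ [])
    (hq : 2 ≤ q) (hM : 2 ≤ M) (hzc : 2 * (A ++ B).length < z.length)
    (h : wpow z M = B ++ A ++ wpow (A ++ B) (q + 2) ++ (A ++ (A ++ B))) : False := by
  -- A rotation of `z` has a power starting with `(A B) ^ (q + 2)`. If `z` is short, it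
  -- synchronises with `A B`, which is shorter than `z`; if `z` is long, then `q = M = 2`.
  obtain ⟨z₁, z₂, rfl, hrot⟩ := exists_append_swap_eq_wpow
    (u := wpow (A ++ B) (q + 2) ++ (A ++ (A ++ B))) (v := B ++ A) (by rw [h]; simp)
  have hB0 := List.length_pos_iff.2 hB
  have hlen := congrArg List.length h
  simp only [length_wpow, List.length_append] at hlen hzc
  rcases le_or_gt ((z₂ ++ z₁).length + (A ++ B).length) ((q + 2) * (A ++ B).length)
    with hlong | hshort
  · obtain ⟨a, ha⟩ := hz.append_swap.exists_eq_wpow_of_wpow_eq_wpow_append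
      (R := A ++ (A ++ B) ++ (B ++ A)) (by rw [← hrot, List.append_assoc]) hlong
    have hlen' := congrArg List.length ha
    simp only [length_wpow, List.length_append] at hlen'
    rcases a with _ | a
    · omega
    · rw [Nat.succ_mul] at hlen'
      omega
  · simp only [List.length_append] at hshort
    obtain rfl : q = 2 := by nlinarith
    obtain rfl : M = 2 := by nlinarith
    exact not_primitive_of_append_self_eq (by rw [← wpow_two, h]) hy

theorem false_of_wpow_eq_of_length_lt {x y z : List α} {K L M : ℕ}
    (hy : Primitive y) (hz : Primitive z) (hK : 3 ≤ K) (hL : 2 ≤ L) (hM : 2 ≤ M)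
    (h : wpow x K = wpow y L ++ wpow z M) (hside : M * z.length ≤ L * y.length)
    (hy_short : L * y.length < x.length + y.length)
    (hz_short : M * z.length < x.length + z.length) : False := by
  have hlen : K * x.length = L * y.length + M * z.length := by
    simpa using congrArg List.length h
  obtain ⟨rfl, rfl⟩ : K = 3 ∧ L = 2 := ⟨by nlinarith, by nlinarith⟩
  obtain ⟨A, B, q, rfl, rfl, hzAB⟩ := exists_factorization_of_wpow_three h (by omega) (by omega)
  have hB : B ≠ [] := by
    rintro rfl
    exact hy A (q + 2) (by omega) (by rw [List.append_nil, ← wpow_succ])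
  have hB0 := List.length_pos_iff.2 hB
  simp only [length_wpow, List.length_append] at hlen hside hz_short
  exact false_of_wpow_eq_append_wpow hy hz hB (by nlinarith) hM
    (by simp only [List.length_append]; omega) hzAB

theorem commonRoot_of_primitive {x y z : List α} {K L M : ℕ}
    (ih : ∀ {x' y' z' : List α} {K' L' M' : ℕ}, 2 ≤ K' → 2 ≤ L' → 2 ≤ M' →
      (wpow x' K').length < (wpow x K).length →
      wpow x' K' = wpow y' L' ++ wpow z' M' → CommonRoot y' z')
    (hx : Primitive x) (hy : Primitive y) (hz : Primitive z) (hK : 2 ≤ K) (hL : 2 ≤ L)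
    (hM : 2 ≤ M) (h : wpow x K = wpow y L ++ wpow z M) : CommonRoot y z := by
  have hrev : wpow x.reverse K = wpow z.reverse M ++ wpow y.reverse L := by
    simpa using congrArg List.reverse h
  wlog hside : M * z.length ≤ L * y.length generalizing x y z L M
  · have := this (fun hK hL hM hlt h' => ih hK hL hM (by simpa using hlt) h')
      hx.reverse hz.reverse hy.reverse hM hL hrev (by simpa using h)
      (by simp only [List.length_reverse]; omega)
    simpa using this.reverse.symm
  rcases le_or_gt (x.length + y.length) (L * y.length) with hy_long | hy_short
  · exact commonRoot_of_length_add_le hx hz (by omega) h hy_long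
  obtain rfl | hK := hK.eq_or_lt
  · obtain ⟨s, t, hlt, hst, hns⟩ :=
      exists_shorter_of_wpow_two hx hz.ne_nil hL hM h hside hy_short
    exact absurd (ih hL hM le_rfl hlt hst) hns
  rcases le_or_gt (x.length + z.length) (M * z.length) with hz_long | hz_short
  · have := commonRoot_of_length_add_le hx.reverse hy.reverse (by omega) hrev
      (by simpa using hz_long)
    simpa using this.reverse.symm
  exact (false_of_wpow_eq_of_length_lt hy hz hK hL hM h hside hy_short hz_short).elim

theorem lyndon_schutzenberger {x y z : List α} {K L M : ℕ} (hK : 2 ≤ K) (hL : 2 ≤ L)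
    (hM : 2 ≤ M) (h : wpow x K = wpow y L ++ wpow z M) : CommonRoot y z := by
  induction hn : (wpow x K).length using Nat.strong_induction_on
    generalizing x y z K L M with
  | _ n ih =>
  rcases eq_or_ne y [] with rfl | hy
  · exact .nil_left z
  rcases eq_or_ne z [] with rfl | hz
  · exact .nil_right y
  have hx : x ≠ [] := by
    rintro rfl
    simp [hy, hz] at h
    omega
  obtain ⟨ρx, a, ha, hρx, rfl⟩ := exists_primitive_root hx
  obtain ⟨ρy, b, hb, hρy, rfl⟩ := exists_primitive_root hy
  obtain ⟨ρz, c, hc, hρz, rfl⟩ := exists_primitive_root hz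
  simp only [← wpow_mul] at h hn
  exact (commonRoot_of_primitive (fun hK' hL' hM' hlt h' => ih _ (hn ▸ hlt) hK' hL' hM' h' rfl)
    hρx hρy hρz (by nlinarith) (by nlinarith) (by nlinarith) h).wpow b c

end

/-- If `u` and `v` are not powers of the same word, then `u ^ L ++ v ^ M` is
primitive for any `L, M ≥ 2`. -/
theorem pow_concat_primitive {A : Type*} (u v : List A)
    (h : ¬ ∃ (w : List A) (i j : ℕ), u = wpow w i ∧ v = wpow w j)
    (L M : ℕ) (hL : 2 ≤ L) (hM : 2 ≤ M) :
    Primitive (wpow u L ++ wpow v M) :=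
  fun _ _ hk hw => h (lyndon_schutzenberger hk hL hM hw.symm)
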